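/- arXiv:math/0505511 — 4 statements merged into one kernel-verified Lean document; each statement's English description precedes it below -/
import Mathlib

section
/- Let R be a Dedekind domain, let M be an R-module whose torsion submodule M_tor is finite, and let h : M → ℝ_{≥0} satisfy: (i) h(x ± y) ≤ h(x) + h(y) for all x, y ∈ M; (ii) h(x) = 0 for every x ∈ M_tor; (iii) there exists c > 0 such that h(x) > c for every x ∉ M_tor; (iv) there exists a ∈ R \ {0} such that h(a·x) ≥ 4·h(x) for all x ∈ M. Assume moreover that the quotient module M/aM is finite. Then for every D > 0, the set {x ∈ M : h(x) ≤ D} is finite. -/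
/-- **Sublemma.** Let `R` be a Dedekind domain, `M` an `R`-module with finite torsion
submodule, and `h : M → ℝ≥0` a height function satisfying the triangle inequality,
vanishing on torsion, uniformly bounded below off torsion, and `h (a • x) ≥ 4 h x` for a
fixed nonzero `a : R`. If moreover `M / aM` is finite, then for every `D > 0` there are
only finitely many `x ∈ M` with `h x ≤ D`. -/
theorem finite_of_height_le
    (R : Type*) [CommRing R] [IsDomain R] [IsDedekindDomain R]
    (M : Type*) [AddCommGroup M] [Module R M]
    -- the torsion submodule of `M` is finite
    (htor : (Submodule.torsion R M : Set M).Finite)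
    -- the height function, with values in `ℝ≥0`
    (h : M → ℝ) (h0 : ∀ x : M, 0 ≤ h x)
    -- (i) triangle inequality
    (hadd : ∀ x y : M, h (x + y) ≤ h x + h y)
    (hsub : ∀ x y : M, h (x - y) ≤ h x + h y)
    -- (ii) vanishing on torsion points
    (hvanish : ∀ x ∈ Submodule.torsion R M, h x = 0)
    -- (iii) uniform lower bound off torsion
    (hlow : ∃ c > (0 : ℝ), ∀ x : M, x ∉ Submodule.torsion R M → c < h x)
    -- (iv) a nonzero element `a` with `h (a • x) ≥ 4 h x`
    (a : R) (ha : a ≠ 0)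
    (hquad : ∀ x : M, 4 * h x ≤ h (a • x))
    -- `M / aM` is finite
    (hfinquot : Finite (M ⧸ LinearMap.range (LinearMap.lsmul R M a))) :
    -- conclusion: sublevel sets of `h` are finite
    ∀ D : ℝ, 0 < D → {x : M | h x ≤ D}.Finite := by

  classical
  obtain ⟨c, hc, hlowc⟩ := hlow
  set p := LinearMap.range (LinearMap.lsmul R M a) with hp
  let π : M → M ⧸ p := Submodule.Quotient.mk
  -- descent step
  have step : ∀ D : ℝ, {x : M | h x ≤ D / 2}.Finite → {x : M | h x ≤ D}.Finite := by
    intro D hhalf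
    -- section choosing a representative of small height in each coset meeting the set
    let σ : (M ⧸ p) → M := fun q =>
      if hq : ∃ r : M, h r ≤ D ∧ π r = q then hq.choose else 0
    have hσ : ∀ x : M, h x ≤ D → h (σ (π x)) ≤ D ∧ π (σ (π x)) = π x := by
      intro x hx
      have hq : ∃ r : M, h r ≤ D ∧ π r = π x := ⟨x, hx, rfl⟩
      simpa only [σ, dif_pos hq] using hq.choose_spec
    let F : M → (M ⧸ p) × M := fun x =>
      (π x, if hx : ∃ y : M, a • y = σ (π x) - x then hx.choose else 0)
    have hF : ∀ x : M, h x ≤ D →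
        a • (F x).2 = σ (π x) - x ∧ h ((F x).2) ≤ D / 2 := by
      intro x hx
      obtain ⟨hσ1, hσ2⟩ := hσ x hx
      have hmem : σ (π x) - x ∈ p := (Submodule.Quotient.eq p).mp hσ2
      obtain ⟨y, hy⟩ := hmem
      have hex : ∃ y : M, a • y = σ (π x) - x := ⟨y, hy⟩
      have heq : a • (F x).2 = σ (π x) - x := by
        simp only [F, dif_pos hex]
        exact hex.choose_spec
      refine ⟨heq, ?_⟩
      have h1 : h (a • (F x).2) ≤ h (σ (π x)) + h x := by
        rw [heq]; exact hsub _ _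
      have h2 := hquad (F x).2
      linarith
    have hinj : Set.InjOn F {x : M | h x ≤ D} := by
      intro x hx x' hx' hxx
      have e1 := (hF x hx).1
      have e2 := (hF x' hx').1
      have hπ : π x = π x' := congrArg Prod.fst hxx
      have hy : (F x).2 = (F x').2 := congrArg Prod.snd hxx
      rw [hπ, hy] at e1
      rw [e2] at e1
      exact (sub_right_injective e1).symm
    have himg : F '' {x : M | h x ≤ D} ⊆
        (Set.univ : Set (M ⧸ p)) ×ˢ {y : M | h y ≤ D / 2} := by
      rintro _ ⟨x, hx, rfl⟩
      exact ⟨Set.mem_univ _, (hF x hx).2⟩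
    exact Set.Finite.of_finite_image
      ((Set.finite_univ.prod hhalf).subset himg) hinj
    -- main induction
  have main : ∀ n : ℕ, ∀ D : ℝ, D ≤ c * 2 ^ n → {x : M | h x ≤ D}.Finite := by
    intro n
    induction n with
    | zero =>
      intro D hD
      refine htor.subset ?_
      intro x hx
      by_contra hxt
      have := hlowc x hxt
      simp only [Set.mem_setOf_eq] at hx
      simp only [pow_zero, mul_one] at hD
      linarith
    | succ n ih =>
      intro D hD
      refine step D (ih (D / 2) ?_)
      have : (2 : ℝ) ^ (n + 1) = 2 * 2 ^ n := by ring
      rw [this] at hD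
      linarith
  intro D hD
  obtain ⟨n, hn⟩ := exists_nat_gt (D / c)
  refine main n D ?_
  have h2 : (n : ℝ) ≤ 2 ^ n := by
    exact_mod_cast Nat.le_of_lt (Nat.lt_two_pow_self (n := n))
  have : D / c < 2 ^ n := lt_of_lt_of_le hn h2
  calc D = c * (D / c) := by field_simp
    _ ≤ c * 2 ^ n := by nlinarith
end

section
/- Let R be a Dedekind domain, let a ∈ R \ {0}, and let M be an R-module such that M/aM is finite. Let h : M → ℝ_{≥0} satisfy: (i) h(x ± y) ≤ h(x) + h(y) for all x, y ∈ M; (iv) h(a·x) ≥ 4·h(x) for all x ∈ M; and assume that for every D > 0 the set {x ∈ M : h(x) ≤ D} is finite. Then M is a finitely generated R-module. -/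
/-!
Choose representatives of `M / aM` and let `C` bound their heights. Writing `x = a • y + q` with
`q` a representative, `4 h(y) ≤ h(a • y) ≤ h(x) + C`, so `h(y) ≤ h(x) / 2` as soon as `h(x) > C`.
Descending this way, every element lies in the span of the finite set `{x | h x ≤ C}`.
-/

namespace Submodule

variable {R M : Type*} [CommRing R] [AddCommGroup M] [Module R M]

theorem exists_finite_forall_exists_sub_mem (N : Submodule R M) (hN : Finite (M ⧸ N)) :
    ∃ T : Set M, T.Finite ∧ ∀ x, ∃ t ∈ T, x - t ∈ N :=
  ⟨Set.range Quotient.out, Set.finite_range _, fun x =>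
    ⟨(Quotient.mk x : M ⧸ N).out, ⟨_, rfl⟩, (Quotient.eq N).1 (Quotient.out_eq' _).symm⟩⟩

theorem eq_top_of_descent (N : Submodule R M) (a : R) (h : M → ℝ) {C : ℝ} (hC : 0 < C)
    (hsmall : ∀ x, h x ≤ C → x ∈ N)
    (hstep : ∀ x, C < h x → ∃ y, h y ≤ h x / 2 ∧ x - a • y ∈ N) : N = ⊤ := by
  have hpow : ∀ n : ℕ, ∀ x, h x ≤ 2 ^ n * C → x ∈ N := by
    intro n
    induction n with
    | zero => simpa using hsmall
    | succ n ih =>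
      intro x hx
      by_cases hxC : h x ≤ C
      · exact hsmall x hxC
      obtain ⟨y, hy, hxy⟩ := hstep x (not_le.1 hxC)
      have hy_mem : y ∈ N := ih y (by rw [pow_succ] at hx; linarith)
      simpa using N.add_mem (N.smul_mem a hy_mem) hxy
  refine eq_top_iff.2 fun x _ => ?_
  obtain ⟨n, hn⟩ := pow_unbounded_of_one_lt (h x / C) one_lt_two
  exact hpow n x ((div_le_iff₀ hC).1 hn.le)

end Submodule

theorem finitely_generated_of_descent_general
    (R : Type*) [CommRing R]
    (a : R)
    (M : Type*) [AddCommGroup M] [Module R M]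
    -- `M / aM` is finite
    (hfinquot : Finite (M ⧸ LinearMap.range (LinearMap.lsmul R M a)))
    -- the height function, with values in `ℝ≥0`
    (h : M → ℝ)
    -- (i) triangle inequality
    (hsub : ∀ x y : M, h (x - y) ≤ h x + h y)
    -- (iv) `h (a • x) ≥ 4 h x`
    (hquad : ∀ x : M, 4 * h x ≤ h (a • x))
    -- sublevel sets of `h` are finite
    (hfin : ∀ D : ℝ, 0 < D → {x : M | h x ≤ D}.Finite) :
    Module.Finite R M := by
  obtain ⟨T, hT, hrep⟩ := Submodule.exists_finite_forall_exists_sub_mem _ hfinquot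
  obtain ⟨C₀, hC₀⟩ := (hT.image h).bddAbove
  set C := max C₀ 1
  have hTC : ∀ t ∈ T, h t ≤ C := fun t ht => (hC₀ ⟨t, ht, rfl⟩).trans (le_max_left _ _)
  have hC : 0 < C := zero_lt_one.trans_le (le_max_right _ _)
  have hspan : Submodule.span R {x | h x ≤ C} = ⊤ := by
    refine Submodule.eq_top_of_descent _ a h hC (fun x hx => Submodule.subset_span hx) ?_
    intro x hxC
    obtain ⟨t, ht, y, hy⟩ := hrep x
    have : 4 * h y ≤ h x + C := calc
      4 * h y ≤ h (x - t) := hy ▸ hquad y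
      _ ≤ h x + C := (hsub x t).trans (by linarith [hTC t ht])
    refine ⟨y, by linarith, ?_⟩
    rw [show x - a • y = t by simp [show a • y = x - t from hy]]
    exact Submodule.subset_span (hTC t ht)
  exact ⟨Submodule.fg_def.2 ⟨_, hfin C hC, hspan⟩⟩

/-- **Descent step.** Let `R` be a Dedekind domain, `a : R` nonzero, and `M` an `R`-module
such that `M / aM` is finite. Suppose `h : M → ℝ≥0` satisfies the triangle inequality and
`h (a • x) ≥ 4 h x`, and that every sublevel set `{x | h x ≤ D}` (for `D > 0`) is finite.
Then `M` is a finitely generated `R`-module. -/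
theorem finitely_generated_of_descent
    (R : Type*) [CommRing R] [IsDomain R] [IsDedekindDomain R]
    (a : R) (ha : a ≠ 0)
    (M : Type*) [AddCommGroup M] [Module R M]
    -- `M / aM` is finite
    (hfinquot : Finite (M ⧸ LinearMap.range (LinearMap.lsmul R M a)))
    -- the height function, with values in `ℝ≥0`
    (h : M → ℝ) (h0 : ∀ x : M, 0 ≤ h x)
    -- (i) triangle inequality
    (hadd : ∀ x y : M, h (x + y) ≤ h x + h y)
    (hsub : ∀ x y : M, h (x - y) ≤ h x + h y)
    -- (iv) `h (a • x) ≥ 4 h x`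
    (hquad : ∀ x : M, 4 * h x ≤ h (a • x))
    -- sublevel sets of `h` are finite
    (hfin : ∀ D : ℝ, 0 < D → {x : M | h x ≤ D}.Finite) :
    Module.Finite R M :=
  finitely_generated_of_descent_general R a M hfinquot h hsub hquad hfin
end

section
/- Let p be a prime, let K be a field of characteristic p, and let E be an elliptic curve defined over K. If P ∈ E(K^perf) is a torsion point whose order is coprime to p, then P lies in the image of the natural inclusion E(K) → E(K^perf). Consequently, the prime-to-p torsion of E(K^perf) coincides with the prime-to-p torsion of E(K). -/
open WeierstrassCurve WeierstrassCurve.Affine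

set_option maxHeartbeats 4000000 in
private lemma certA {F : Type*} [Field F] (a1 a2 a3 a4 a6 x1 y1 x2 y2 l dl d1 d2 x3 y3 : F)
    (hc : x1 - x2 ≠ 0)
    (heq1 : y1 ^ 2 + a1 * x1 * y1 + a3 * y1 = x1 ^ 3 + a2 * x1 ^ 2 + a4 * x1 + a6)
    (heq2 : y2 ^ 2 + a1 * x2 * y2 + a3 * y2 = x2 ^ 3 + a2 * x2 ^ 2 + a4 * x2 + a6)
    (hl : l * (x1 - x2) = y1 - y2)
    (hdl : dl * (x1 - x2) = (d1 * (3 * x1 ^ 2 + 2 * a2 * x1 + a4 - a1 * y1)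
        - d2 * (3 * x2 ^ 2 + 2 * a2 * x2 + a4 - a1 * y2))
      - l * (d1 * (2 * y1 + a1 * x1 + a3) - d2 * (2 * y2 + a1 * x2 + a3)))
    (hx3 : x3 = l ^ 2 + a1 * l - a2 - x1 - x2)
    (hy3 : y3 = -(l * (x3 - x1) + y1) - a1 * x3 - a3) :
    ((2 * l + a1) * dl - d1 * (2 * y1 + a1 * x1 + a3) - d2 * (2 * y2 + a1 * x2 + a3)
        = (d1 + d2) * (2 * y3 + a1 * x3 + a3)) ∧
    (-(dl * (x3 - x1) + l * ((d1 + d2) * (2 * y3 + a1 * x3 + a3)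
          - d1 * (2 * y1 + a1 * x1 + a3)) + d1 * (3 * x1 ^ 2 + 2 * a2 * x1 + a4 - a1 * y1))
        - a1 * ((d1 + d2) * (2 * y3 + a1 * x3 + a3))
        = (d1 + d2) * (3 * x3 ^ 2 + 2 * a2 * x3 + a4 - a1 * y3)) := by
  subst hy3
  subst hx3
  constructor
  · apply mul_right_cancel₀ (pow_ne_zero 4 hc)
    linear_combination (norm := ring1) ((-2)*x2^3*l + 6*x1*x2^2*l + (-6)*x1^2*x2*l + 2*x1^3*l + (-1)*a1*x2^3 + 3*a1*x1*x2^2 + (-3)*a1*x1^2*x2 + a1*x1^3) * hdl + (2*x2*y2^2*d2 + (-2)*x2*y2^2*d1 + 2*x2^2*y2*l*d2 + (-2)*x2^2*y2*l*d1 + (-2)*x2^3*l^2*d2 + (-2)*x2^3*l^2*d1 + (-4)*x2^4*d2 + 2*x2^4*d1 + 2*y1*x2^2*l*d2 + (-2)*y1*x2^2*l*d1 + (-2)*y1^2*x2*d2 + 2*y1^2*x2*d1 + (-2)*x1*y2^2*d2 + 2*x1*y2^2*d1 + (-4)*x1*x2*y2*l*d2 + 4*x1*x2*y2*l*d1 +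 6*x1*x2^2*l^2*d2 + 6*x1*x2^2*l^2*d1 + 10*x1*x2^3*d2 + (-2)*x1*x2^3*d1 + (-4)*x1*y1*x2*l*d2 + 4*x1*y1*x2*l*d1 + 2*x1*y1^2*d2 + (-2)*x1*y1^2*d1 + 2*x1^2*y2*l*d2 + (-2)*x1^2*y2*l*d1 + (-6)*x1^2*x2*l^2*d2 + (-6)*x1^2*x2*l^2*d1 + (-12)*x1^2*x2^2*d2 + 2*x1^2*y1*l*d2 + (-2)*x1^2*y1*l*d1 + 2*x1^3*l^2*d2 + 2*x1^3*l^2*d1 + 10*x1^3*x2*d2 + (-2)*x1^3*x2*d1 + (-4)*x1^4*d2 + 2*x1^4*d1 + (-2)*a4*x2^2*d2 + 2*a4*x2^2*d1 + 4*a4*x1*x2*d2 + (-4)*a4*x1*x2*d1 + (-2)*a4*x1^2*d2 + 2*a4*x1^2*d1 + 2*a3*x2*y2*d2 + (-2)*a3*x2*y2*d1 + 2*a3*x2^2*l*d2 + (-2)*a3*x2^2*l*d1 + (-2)*a3*y1*x2*d2 + 2*a3*y1*x2*d1 + (-2)*a3*x1*y2*d2 + 2*a3*x1*y2*d1 + (-4)*a3*x1*x2*l*d2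 + 4*a3*x1*x2*l*d1 + 2*a3*x1*y1*d2 + (-2)*a3*x1*y1*d1 + 2*a3*x1^2*l*d2 + (-2)*a3*x1^2*l*d1 + (-2)*a2*x2^3*d2 + 2*a2*x2^3*d1 + 2*a2*x1*x2^2*d2 + (-2)*a2*x1*x2^2*d1 + 2*a2*x1^2*x2*d2 + (-2)*a2*x1^2*x2*d1 + (-2)*a2*x1^3*d2 + 2*a2*x1^3*d1 + 3*a1*x2^2*y2*d2 + (-3)*a1*x2^2*y2*d1 + (-1)*a1*x2^3*l*d2 + (-3)*a1*x2^3*l*d1 + a1*y1*x2^2*d2 + (-1)*a1*y1*x2^2*d1 + (-4)*a1*x1*x2*y2*d2 + 4*a1*x1*x2*y2*d1 + 5*a1*x1*x2^2*l*d2 + 7*a1*x1*x2^2*l*d1 + (-4)*a1*x1*y1*x2*d2 + 4*a1*x1*y1*x2*d1 + a1*x1^2*y2*d2 + (-1)*a1*x1^2*y2*d1 + (-7)*a1*x1^2*x2*l*d2 + (-5)*a1*x1^2*x2*l*d1 + 3*a1*x1^2*y1*d2 + (-3)*a1*x1^2*y1*d1 + 3*a1*x1^3*l*d2 + a1*x1^3*l*d1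 + a1*a3*x2^2*d2 + (-1)*a1*a3*x2^2*d1 + (-2)*a1*a3*x1*x2*d2 + 2*a1*a3*x1*x2*d1 + a1*a3*x1^2*d2 + (-1)*a1*a3*x1^2*d1 + (-1)*a1^2*x2^3*d1 + a1^2*x1*x2^2*d2 + 2*a1^2*x1*x2^2*d1 + (-2)*a1^2*x1^2*x2*d2 + (-1)*a1^2*x1^2*x2*d1 + a1^2*x1^3*d2) * hl + (2*x2*y2*d2 + (-2)*x2*y2*d1 + (-2)*y1*x2*d2 + 2*y1*x2*d1 + (-2)*x1*y2*d2 + 2*x1*y2*d1 + 2*x1*y1*d2 + (-2)*x1*y1*d1 + a1*x2^2*d2 + (-1)*a1*x2^2*d1 + (-2)*a1*x1*x2*d2 + 2*a1*x1*x2*d1 + a1*x1^2*d2 + (-1)*a1*x1^2*d1) * heq1 + ((-2)*x2*y2*d2 + 2*x2*y2*d1 + 2*y1*x2*d2 + (-2)*y1*x2*d1 + 2*x1*y2*d2 + (-2)*x1*y2*d1 + (-2)*x1*y1*d2 + 2*x1*y1*d1 + (-1)*a1*x2^2*d2 + a1*x2^2*d1 + 2*a1*x1*x2*d2 + (-2)*a1*x1*x2*d1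 + (-1)*a1*x1^2*d2 + a1*x1^2*d1) * heq2
  · apply mul_right_cancel₀ (pow_ne_zero 5 hc)
    linear_combination (norm := ring1) ((-1)*x2^4*l^2 + x2^5 + 4*x1*x2^3*l^2 + (-2)*x1*x2^4 + (-6)*x1^2*x2^2*l^2 + (-2)*x1^2*x2^3 + 4*x1^3*x2*l^2 + 8*x1^3*x2^2 + (-1)*x1^4*l^2 + (-7)*x1^4*x2 + 2*x1^5 + a2*x2^4 + (-4)*a2*x1*x2^3 + 6*a2*x1^2*x2^2 + (-4)*a2*x1^3*x2 + a2*x1^4 + (-1)*a1*x2^4*l + 4*a1*x1*x2^3*l + (-6)*a1*x1^2*x2^2*l + 4*a1*x1^3*x2*l + (-1)*a1*x1^4*l) * hdl + (x2*y2^3*d2 + (-1)*x2*y2^3*d1 + x2^2*y2^2*l*d2 + (-1)*x2^2*y2^2*l*d1 + x2^3*y2*l^2*d2 + (-1)*x2^3*y2*l^2*d1 + (-1)*x2^4*l^3*d2 + (-1)*x2^4*l^3*d1 + (-1)*x2^4*y2*d2 + 4*x2^4*y2*d1 + x2^5*l*d2 + 4*x2^5*l*d1 + (-1)*y1*x2*y2^2*d2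 + y1*x2*y2^2*d1 + y1*x2^3*l^2*d2 + (-1)*y1*x2^3*l^2*d1 + y1*x2^4*d2 + 2*y1*x2^4*d1 + (-1)*y1^2*x2*y2*d2 + y1^2*x2*y2*d1 + (-1)*y1^2*x2^2*l*d2 + y1^2*x2^2*l*d1 + y1^3*x2*d2 + (-1)*y1^3*x2*d1 + (-1)*x1*y2^3*d2 + x1*y2^3*d1 + (-2)*x1*x2*y2^2*l*d2 + 2*x1*x2*y2^2*l*d1 + (-3)*x1*x2^2*y2*l^2*d2 + 3*x1*x2^2*y2*l^2*d1 + 4*x1*x2^3*l^3*d2 + 4*x1*x2^3*l^3*d1 + (-2)*x1*x2^3*y2*d2 + (-10)*x1*x2^3*y2*d1 + (-5)*x1*x2^4*l*d2 + (-14)*x1*x2^4*l*d1 + x1*y1*y2^2*d2 + (-1)*x1*y1*y2^2*d1 + (-3)*x1*y1*x2^2*l^2*d2 + 3*x1*y1*x2^2*l^2*d1 + (-4)*x1*y1*x2^3*d2 + (-8)*x1*y1*x2^3*d1 + x1*y1^2*y2*d2 + (-1)*x1*y1^2*y2*d1 + 2*x1*y1^2*x2*l*d2 + (-2)*x1*y1^2*x2*l*d1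 + (-1)*x1*y1^3*d2 + x1*y1^3*d1 + x1^2*y2^2*l*d2 + (-1)*x1^2*y2^2*l*d1 + 3*x1^2*x2*y2*l^2*d2 + (-3)*x1^2*x2*y2*l^2*d1 + (-6)*x1^2*x2^2*l^3*d2 + (-6)*x1^2*x2^2*l^3*d1 + 9*x1^2*x2^2*y2*d2 + 9*x1^2*x2^2*y2*d1 + 7*x1^2*x2^3*l*d2 + 19*x1^2*x2^3*l*d1 + 3*x1^2*y1*x2*l^2*d2 + (-3)*x1^2*y1*x2*l^2*d1 + 9*x1^2*y1*x2^2*d2 + 9*x1^2*y1*x2^2*d1 + (-1)*x1^2*y1^2*l*d2 + x1^2*y1^2*l*d1 + (-1)*x1^3*y2*l^2*d2 + x1^3*y2*l^2*d1 + 4*x1^3*x2*l^3*d2 + 4*x1^3*x2*l^3*d1 + (-8)*x1^3*x2*y2*d2 + (-4)*x1^3*x2*y2*d1 + (-1)*x1^3*x2^2*l*d2 + (-13)*x1^3*x2^2*l*d1 + (-1)*x1^3*y1*l^2*d2 + x1^3*y1*l^2*d1 + (-10)*x1^3*y1*x2*d2 + (-2)*x1^3*y1*x2*d1 + (-1)*x1^4*l^3*d2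 + (-1)*x1^4*l^3*d1 + 2*x1^4*y2*d2 + x1^4*y2*d1 + (-4)*x1^4*x2*l*d2 + 5*x1^4*x2*l*d1 + 4*x1^4*y1*d2 + (-1)*x1^4*y1*d1 + 2*x1^5*l*d2 + (-1)*x1^5*l*d1 + (-1)*a4*x2^2*y2*d2 + a4*x2^2*y2*d1 + (-1)*a4*x2^3*l*d2 + a4*x2^3*l*d1 + a4*y1*x2^2*d2 + (-1)*a4*y1*x2^2*d1 + 2*a4*x1*x2*y2*d2 + (-2)*a4*x1*x2*y2*d1 + 3*a4*x1*x2^2*l*d2 + (-3)*a4*x1*x2^2*l*d1 + (-2)*a4*x1*y1*x2*d2 + 2*a4*x1*y1*x2*d1 + (-1)*a4*x1^2*y2*d2 + a4*x1^2*y2*d1 + (-3)*a4*x1^2*x2*l*d2 + 3*a4*x1^2*x2*l*d1 + a4*x1^2*y1*d2 + (-1)*a4*x1^2*y1*d1 + a4*x1^3*l*d2 + (-1)*a4*x1^3*l*d1 + a3*x2*y2^2*d2 + (-1)*a3*x2*y2^2*d1 + a3*x2^2*y2*l*d2 + (-1)*a3*x2^2*y2*l*d1 + a3*x2^3*l^2*d2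 + (-1)*a3*x2^3*l^2*d1 + 3*a3*x2^4*d1 + (-2)*a3*y1*x2*y2*d2 + 2*a3*y1*x2*y2*d1 + (-1)*a3*y1*x2^2*l*d2 + a3*y1*x2^2*l*d1 + a3*y1^2*x2*d2 + (-1)*a3*y1^2*x2*d1 + (-1)*a3*x1*y2^2*d2 + a3*x1*y2^2*d1 + (-2)*a3*x1*x2*y2*l*d2 + 2*a3*x1*x2*y2*l*d1 + (-3)*a3*x1*x2^2*l^2*d2 + 3*a3*x1*x2^2*l^2*d1 + (-3)*a3*x1*x2^3*d2 + (-9)*a3*x1*x2^3*d1 + 2*a3*x1*y1*y2*d2 + (-2)*a3*x1*y1*y2*d1 + 2*a3*x1*y1*x2*l*d2 + (-2)*a3*x1*y1*x2*l*d1 + (-1)*a3*x1*y1^2*d2 + a3*x1*y1^2*d1 + a3*x1^2*y2*l*d2 + (-1)*a3*x1^2*y2*l*d1 + 3*a3*x1^2*x2*l^2*d2 + (-3)*a3*x1^2*x2*l^2*d1 + 9*a3*x1^2*x2^2*d2 + 9*a3*x1^2*x2^2*d1 + (-1)*a3*x1^2*y1*l*d2 + a3*x1^2*y1*l*d1 +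 (-1)*a3*x1^3*l^2*d2 + a3*x1^3*l^2*d1 + (-9)*a3*x1^3*x2*d2 + (-3)*a3*x1^3*x2*d1 + 3*a3*x1^4*d2 + (-2)*a2*x2^3*y2*d2 + 2*a2*x2^3*y2*d1 + 2*a2*x2^4*l*d1 + 4*a2*x1*x2^2*y2*d2 + (-4)*a2*x1*x2^2*y2*d1 + (-2)*a2*x1*x2^3*l*d2 + (-6)*a2*x1*x2^3*l*d1 + 2*a2*x1*y1*x2^2*d2 + (-2)*a2*x1*y1*x2^2*d1 + (-2)*a2*x1^2*x2*y2*d2 + 2*a2*x1^2*x2*y2*d1 + 6*a2*x1^2*x2^2*l*d2 + 6*a2*x1^2*x2^2*l*d1 + (-4)*a2*x1^2*y1*x2*d2 + 4*a2*x1^2*y1*x2*d1 + (-6)*a2*x1^3*x2*l*d2 + (-2)*a2*x1^3*x2*l*d1 + 2*a2*x1^3*y1*d2 + (-2)*a2*x1^3*y1*d1 + 2*a2*x1^4*l*d2 + (-1)*a2*a3*x2^3*d2 + a2*a3*x2^3*d1 + 3*a2*a3*x1*x2^2*d2 + (-3)*a2*a3*x1*x2^2*d1 + (-3)*a2*a3*x1^2*x2*d2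 + 3*a2*a3*x1^2*x2*d1 + a2*a3*x1^3*d2 + (-1)*a2*a3*x1^3*d1 + 2*a1*x2^2*y2^2*d2 + (-2)*a1*x2^2*y2^2*d1 + 2*a1*x2^3*y2*l*d2 + (-2)*a1*x2^3*y2*l*d1 + (-1)*a1*x2^4*l^2*d2 + (-2)*a1*x2^4*l^2*d1 + 4*a1*x2^5*d1 + (-1)*a1*y1*x2^2*y2*d2 + a1*y1*x2^2*y2*d1 + a1*y1*x2^3*l*d2 + (-1)*a1*y1*x2^3*l*d1 + (-1)*a1*y1^2*x2^2*d2 + a1*y1^2*x2^2*d1 + (-3)*a1*x1*x2*y2^2*d2 + 3*a1*x1*x2*y2^2*d1 + (-5)*a1*x1*x2^2*y2*l*d2 + 5*a1*x1*x2^2*y2*l*d1 + 5*a1*x1*x2^3*l^2*d2 + 7*a1*x1*x2^3*l^2*d1 + (-3)*a1*x1*x2^4*d2 + (-11)*a1*x1*x2^4*d1 + (-4)*a1*x1*y1*x2^2*l*d2 + 4*a1*x1*y1*x2^2*l*d1 + 3*a1*x1*y1^2*x2*d2 + (-3)*a1*x1*y1^2*x2*d1 + a1*x1^2*y2^2*d2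 + (-1)*a1*x1^2*y2^2*d1 + 4*a1*x1^2*x2*y2*l*d2 + (-4)*a1*x1^2*x2*y2*l*d1 + (-9)*a1*x1^2*x2^2*l^2*d2 + (-9)*a1*x1^2*x2^2*l^2*d1 + 6*a1*x1^2*x2^3*d2 + 10*a1*x1^2*x2^3*d1 + a1*x1^2*y1*y2*d2 + (-1)*a1*x1^2*y1*y2*d1 + 5*a1*x1^2*y1*x2*l*d2 + (-5)*a1*x1^2*y1*x2*l*d1 + (-2)*a1*x1^2*y1^2*d2 + 2*a1*x1^2*y1^2*d1 + (-1)*a1*x1^3*y2*l*d2 + a1*x1^3*y2*l*d1 + 7*a1*x1^3*x2*l^2*d2 + 5*a1*x1^3*x2*l^2*d1 + (-4)*a1*x1^3*x2^2*d1 + (-2)*a1*x1^3*y1*l*d2 + 2*a1*x1^3*y1*l*d1 + (-2)*a1*x1^4*l^2*d2 + (-1)*a1*x1^4*l^2*d1 + (-6)*a1*x1^4*x2*d2 + 2*a1*x1^4*x2*d1 + 3*a1*x1^5*d2 + (-1)*a1*x1^5*d1 + (-1)*a1*a4*x2^3*d2 + a1*a4*x2^3*d1 + 3*a1*a4*x1*x2^2*d2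 + (-3)*a1*a4*x1*x2^2*d1 + (-3)*a1*a4*x1^2*x2*d2 + 3*a1*a4*x1^2*x2*d1 + a1*a4*x1^3*d2 + (-1)*a1*a4*x1^3*d1 + a1*a3*x2^2*y2*d2 + (-1)*a1*a3*x2^2*y2*d1 + a1*a3*x2^3*l*d2 + (-1)*a1*a3*x2^3*l*d1 + (-1)*a1*a3*y1*x2^2*d2 + a1*a3*y1*x2^2*d1 + (-2)*a1*a3*x1*x2*y2*d2 + 2*a1*a3*x1*x2*y2*d1 + (-3)*a1*a3*x1*x2^2*l*d2 + 3*a1*a3*x1*x2^2*l*d1 + 2*a1*a3*x1*y1*x2*d2 + (-2)*a1*a3*x1*y1*x2*d1 + a1*a3*x1^2*y2*d2 + (-1)*a1*a3*x1^2*y2*d1 + 3*a1*a3*x1^2*x2*l*d2 + (-3)*a1*a3*x1^2*x2*l*d1 + (-1)*a1*a3*x1^2*y1*d2 + a1*a3*x1^2*y1*d1 + (-1)*a1*a3*x1^3*l*d2 + a1*a3*x1^3*l*d1 + (-1)*a1*a2*x2^4*d2 + 2*a1*a2*x2^4*d1 + a1*a2*x1*x2^3*d2 + (-5)*a1*a2*x1*x2^3*d1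 + 3*a1*a2*x1^2*x2^2*d2 + 3*a1*a2*x1^2*x2^2*d1 + (-5)*a1*a2*x1^3*x2*d2 + a1*a2*x1^3*x2*d1 + 2*a1*a2*x1^4*d2 + (-1)*a1*a2*x1^4*d1 + a1^2*x2^3*y2*d2 + (-1)*a1^2*x2^3*y2*d1 + (-1)*a1^2*x2^4*l*d1 + (-2)*a1^2*x1*x2^2*y2*d2 + 2*a1^2*x1*x2^2*y2*d1 + a1^2*x1*x2^3*l*d2 + 3*a1^2*x1*x2^3*l*d1 + (-1)*a1^2*x1*y1*x2^2*d2 + a1^2*x1*y1*x2^2*d1 + a1^2*x1^2*x2*y2*d2 + (-1)*a1^2*x1^2*x2*y2*d1 + (-3)*a1^2*x1^2*x2^2*l*d2 + (-3)*a1^2*x1^2*x2^2*l*d1 + 2*a1^2*x1^2*y1*x2*d2 + (-2)*a1^2*x1^2*y1*x2*d1 + 3*a1^2*x1^3*x2*l*d2 + a1^2*x1^3*x2*l*d1 + (-1)*a1^2*x1^3*y1*d2 + a1^2*x1^3*y1*d1 + (-1)*a1^2*x1^4*l*d2) * hl + (x2^4*d2 + 2*x2^4*d1 + (-2)*y1*x2*y2*d2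 + 2*y1*x2*y2*d1 + y1^2*x2*d2 + (-1)*y1^2*x2*d1 + (-4)*x1*x2^3*d2 + (-8)*x1*x2^3*d1 + 2*x1*y1*y2*d2 + (-2)*x1*y1*y2*d1 + (-1)*x1*y1^2*d2 + x1*y1^2*d1 + 9*x1^2*x2^2*d2 + 9*x1^2*x2^2*d1 + (-9)*x1^3*x2*d2 + (-3)*x1^3*x2*d1 + 3*x1^4*d2 + a6*x2*d2 + (-1)*a6*x2*d1 + (-1)*a6*x1*d2 + a6*x1*d1 + a4*x2^2*d2 + (-1)*a4*x2^2*d1 + (-1)*a4*x1*x2*d2 + a4*x1*x2*d1 + (-1)*a3*x2*y2*d2 + a3*x2*y2*d1 + a3*x1*y2*d2 + (-1)*a3*x1*y2*d1 + 2*a2*x1*x2^2*d2 + (-2)*a2*x1*x2^2*d1 + (-3)*a2*x1^2*x2*d2 + 3*a2*x1^2*x2*d1 + a2*x1^3*d2 + (-1)*a2*x1^3*d1 + (-1)*a1*y1*x2^2*d2 + a1*y1*x2^2*d1 + (-1)*a1*x1*x2*y2*d2 + a1*x1*x2*y2*d1 + 2*a1*x1*y1*x2*d2 + (-2)*a1*x1*y1*x2*d1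 + a1*x1^2*y2*d2 + (-1)*a1*x1^2*y2*d1 + (-1)*a1*x1^2*y1*d2 + a1*x1^2*y1*d1) * heq1 + ((-1)*x2*y2^2*d2 + x2*y2^2*d1 + (-3)*x2^4*d1 + 2*y1*x2*y2*d2 + (-2)*y1*x2*y2*d1 + x1*y2^2*d2 + (-1)*x1*y2^2*d1 + 3*x1*x2^3*d2 + 9*x1*x2^3*d1 + (-2)*x1*y1*y2*d2 + 2*x1*y1*y2*d1 + (-9)*x1^2*x2^2*d2 + (-9)*x1^2*x2^2*d1 + 8*x1^3*x2*d2 + 4*x1^3*x2*d1 + (-2)*x1^4*d2 + (-1)*x1^4*d1 + (-1)*a6*x2*d2 + a6*x2*d1 + a6*x1*d2 + (-1)*a6*x1*d1 + (-1)*a4*x1*x2*d2 + a4*x1*x2*d1 + a4*x1^2*d2 + (-1)*a4*x1^2*d1 + a3*y1*x2*d2 + (-1)*a3*y1*x2*d1 + (-1)*a3*x1*y1*d2 + a3*x1*y1*d1 + a2*x2^3*d2 + (-1)*a2*x2^3*d1 + (-3)*a2*x1*x2^2*d2 + 3*a2*x1*x2^2*d1 + 2*a2*x1^2*x2*d2 +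 (-2)*a2*x1^2*x2*d1 + (-1)*a1*x2^2*y2*d2 + a1*x2^2*y2*d1 + a1*y1*x2^2*d2 + (-1)*a1*y1*x2^2*d1 + 2*a1*x1*x2*y2*d2 + (-2)*a1*x1*x2*y2*d1 + (-1)*a1*x1*y1*x2*d2 + a1*x1*y1*x2*d1 + (-1)*a1*x1^2*y2*d2 + a1*x1^2*y2*d1) * heq2

set_option maxHeartbeats 4000000 in
private lemma certB {F : Type*} [Field F] (a1 a2 a3 a4 a6 x1 y1 l dl d1 x3 y3 : F)
    (hc : 2 * y1 + a1 * x1 + a3 ≠ 0)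
    (heq1 : y1 ^ 2 + a1 * x1 * y1 + a3 * y1 = x1 ^ 3 + a2 * x1 ^ 2 + a4 * x1 + a6)
    (hl : l * (2 * y1 + a1 * x1 + a3) = 3 * x1 ^ 2 + 2 * a2 * x1 + a4 - a1 * y1)
    (hdl : dl * (2 * y1 + a1 * x1 + a3)
        = ((6 * x1 + 2 * a2) * (d1 * (2 * y1 + a1 * x1 + a3))
            - a1 * (d1 * (3 * x1 ^ 2 + 2 * a2 * x1 + a4 - a1 * y1)))
          - l * (2 * (d1 * (3 * x1 ^ 2 + 2 * a2 * x1 + a4 - a1 * y1))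
            + a1 * (d1 * (2 * y1 + a1 * x1 + a3))))
    (hx3 : x3 = l ^ 2 + a1 * l - a2 - x1 - x1)
    (hy3 : y3 = -(l * (x3 - x1) + y1) - a1 * x3 - a3) :
    ((2 * l + a1) * dl - (d1 * (2 * y1 + a1 * x1 + a3) + d1 * (2 * y1 + a1 * x1 + a3))
        = (d1 + d1) * (2 * y3 + a1 * x3 + a3)) ∧
    (-(dl * (x3 - x1) + l * ((d1 + d1) * (2 * y3 + a1 * x3 + a3)
          - d1 * (2 * y1 + a1 * x1 + a3)) + d1 * (3 * x1 ^ 2 + 2 * a2 * x1 + a4 - a1 * y1))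
        - a1 * ((d1 + d1) * (2 * y3 + a1 * x3 + a3))
        = (d1 + d1) * (3 * x3 ^ 2 + 2 * a2 * x3 + a4 - a1 * y3)) := by
  subst hy3
  subst hx3
  constructor
  · apply mul_right_cancel₀ (pow_ne_zero 4 hc)
    linear_combination (norm := ring1) (16*y1^3*l + 24*a3*y1^2*l + 12*a3^2*y1*l + 2*a3^3*l + 8*a1*y1^3 + 24*a1*x1*y1^2*l + 12*a1*a3*y1^2 + 24*a1*a3*x1*y1*l + 6*a1*a3^2*y1 + 6*a1*a3^2*x1*l + a1*a3^3 + 12*a1^2*x1*y1^2 + 12*a1^2*x1^2*y1*l + 12*a1^2*a3*x1*y1 + 6*a1^2*a3*x1^2*l + 3*a1^2*a3^2*x1 + 6*a1^3*x1^2*y1 + 2*a1^3*x1^3*l + 3*a1^3*a3*x1^2 + a1^4*x1^3) * hdl + (32*y1^3*l^2*d1 + 48*a3*y1^2*l^2*d1 + 24*a3^2*y1*l^2*d1 + 4*a3^3*l^2*d1 + 32*a1*y1^3*l*d1 + 48*a1*x1*y1^2*l^2*d1 + 48*a1*a3*y1^2*l*d1 + 48*a1*a3*x1*y1*l^2*d1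 + 24*a1*a3^2*y1*l*d1 + 12*a1*a3^2*x1*l^2*d1 + 4*a1*a3^3*l*d1 + 8*a1^2*y1^3*d1 + 48*a1^2*x1*y1^2*l*d1 + 24*a1^2*x1^2*y1*l^2*d1 + 12*a1^2*a3*y1^2*d1 + 48*a1^2*a3*x1*y1*l*d1 + 12*a1^2*a3*x1^2*l^2*d1 + 6*a1^2*a3^2*y1*d1 + 12*a1^2*a3^2*x1*l*d1 + a1^2*a3^3*d1 + 12*a1^3*x1*y1^2*d1 + 24*a1^3*x1^2*y1*l*d1 + 4*a1^3*x1^3*l^2*d1 + 12*a1^3*a3*x1*y1*d1 + 12*a1^3*a3*x1^2*l*d1 + 3*a1^3*a3^2*x1*d1 + 6*a1^4*x1^2*y1*d1 + 4*a1^4*x1^3*l*d1 + 3*a1^4*a3*x1^2*d1 + a1^5*x1^3*d1) * hl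
  · apply mul_right_cancel₀ (pow_ne_zero 5 hc)
    linear_combination (norm := ring1) ((-16)*y1^4*l^2 + 48*x1*y1^4 + (-32)*a3*y1^3*l^2 + 96*a3*x1*y1^3 + (-24)*a3^2*y1^2*l^2 + 72*a3^2*x1*y1^2 + (-8)*a3^3*y1*l^2 + 24*a3^3*x1*y1 + (-1)*a3^4*l^2 + 3*a3^4*x1 + 16*a2*y1^4 + 32*a2*a3*y1^3 + 24*a2*a3^2*y1^2 + 8*a2*a3^3*y1 + a2*a3^4 + (-16)*a1*y1^4*l + (-32)*a1*x1*y1^3*l^2 + 96*a1*x1^2*y1^3 + (-32)*a1*a3*y1^3*l + (-48)*a1*a3*x1*y1^2*l^2 + 144*a1*a3*x1^2*y1^2 + (-24)*a1*a3^2*y1^2*l + (-24)*a1*a3^2*x1*y1*l^2 + 72*a1*a3^2*x1^2*y1 + (-8)*a1*a3^3*y1*l + (-4)*a1*a3^3*x1*l^2 + 12*a1*a3^3*x1^2 + (-1)*a1*a3^4*l + 32*a1*a2*x1*y1^3 + 48*a1*a2*a3*x1*y1^2 + 24*a1*a2*a3^2*x1*y1 + 4*a1*a2*a3^3*x1 +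 (-32)*a1^2*x1*y1^3*l + (-24)*a1^2*x1^2*y1^2*l^2 + 72*a1^2*x1^3*y1^2 + (-48)*a1^2*a3*x1*y1^2*l + (-24)*a1^2*a3*x1^2*y1*l^2 + 72*a1^2*a3*x1^3*y1 + (-24)*a1^2*a3^2*x1*y1*l + (-6)*a1^2*a3^2*x1^2*l^2 + 18*a1^2*a3^2*x1^3 + (-4)*a1^2*a3^3*x1*l + 24*a1^2*a2*x1^2*y1^2 + 24*a1^2*a2*a3*x1^2*y1 + 6*a1^2*a2*a3^2*x1^2 + (-24)*a1^3*x1^2*y1^2*l + (-8)*a1^3*x1^3*y1*l^2 + 24*a1^3*x1^4*y1 + (-24)*a1^3*a3*x1^2*y1*l + (-4)*a1^3*a3*x1^3*l^2 + 12*a1^3*a3*x1^4 + (-6)*a1^3*a3^2*x1^2*l + 8*a1^3*a2*x1^3*y1 + 4*a1^3*a2*a3*x1^3 + (-8)*a1^4*x1^3*y1*l + (-1)*a1^4*x1^4*l^2 + 3*a1^4*x1^5 + (-4)*a1^4*a3*x1^3*l + a1^4*a2*x1^4 + (-1)*a1^5*x1^4*l) * hdl + ((-32)*y1^4*l^3*d1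 + 96*y1^5*d1 + 96*x1*y1^4*l*d1 + (-64)*a3*y1^3*l^3*d1 + 240*a3*y1^4*d1 + 192*a3*x1*y1^3*l*d1 + (-48)*a3^2*y1^2*l^3*d1 + 240*a3^2*y1^3*d1 + 144*a3^2*x1*y1^2*l*d1 + (-16)*a3^3*y1*l^3*d1 + 120*a3^3*y1^2*d1 + 48*a3^3*x1*y1*l*d1 + (-2)*a3^4*l^3*d1 + 30*a3^4*y1*d1 + 6*a3^4*x1*l*d1 + 3*a3^5*d1 + 32*a2*y1^4*l*d1 + 64*a2*a3*y1^3*l*d1 + 48*a2*a3^2*y1^2*l*d1 + 16*a2*a3^3*y1*l*d1 + 2*a2*a3^4*l*d1 + (-48)*a1*y1^4*l^2*d1 + (-64)*a1*x1*y1^3*l^3*d1 + 288*a1*x1*y1^4*d1 + 192*a1*x1^2*y1^3*l*d1 + (-96)*a1*a3*y1^3*l^2*d1 + (-96)*a1*a3*x1*y1^2*l^3*d1 + 576*a1*a3*x1*y1^3*d1 + 288*a1*a3*x1^2*y1^2*l*d1 + (-72)*a1*a3^2*y1^2*l^2*d1 + (-48)*a1*a3^2*x1*y1*l^3*d1 +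 432*a1*a3^2*x1*y1^2*d1 + 144*a1*a3^2*x1^2*y1*l*d1 + (-24)*a1*a3^3*y1*l^2*d1 + (-8)*a1*a3^3*x1*l^3*d1 + 144*a1*a3^3*x1*y1*d1 + 24*a1*a3^3*x1^2*l*d1 + (-3)*a1*a3^4*l^2*d1 + 18*a1*a3^4*x1*d1 + 16*a1*a2*y1^4*d1 + 64*a1*a2*x1*y1^3*l*d1 + 32*a1*a2*a3*y1^3*d1 + 96*a1*a2*a3*x1*y1^2*l*d1 + 24*a1*a2*a3^2*y1^2*d1 + 48*a1*a2*a3^2*x1*y1*l*d1 + 8*a1*a2*a3^3*y1*d1 + 8*a1*a2*a3^3*x1*l*d1 + a1*a2*a3^4*d1 + (-16)*a1^2*y1^4*l*d1 + (-96)*a1^2*x1*y1^3*l^2*d1 + (-48)*a1^2*x1^2*y1^2*l^3*d1 + 336*a1^2*x1^2*y1^3*d1 + 144*a1^2*x1^3*y1^2*l*d1 + (-32)*a1^2*a3*y1^3*l*d1 + (-144)*a1^2*a3*x1*y1^2*l^2*d1 + (-48)*a1^2*a3*x1^2*y1*l^3*d1 + 504*a1^2*a3*x1^2*y1^2*d1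 + 144*a1^2*a3*x1^3*y1*l*d1 + (-24)*a1^2*a3^2*y1^2*l*d1 + (-72)*a1^2*a3^2*x1*y1*l^2*d1 + (-12)*a1^2*a3^2*x1^2*l^3*d1 + 252*a1^2*a3^2*x1^2*y1*d1 + 36*a1^2*a3^2*x1^3*l*d1 + (-8)*a1^2*a3^3*y1*l*d1 + (-12)*a1^2*a3^3*x1*l^2*d1 + 42*a1^2*a3^3*x1^2*d1 + (-1)*a1^2*a3^4*l*d1 + 32*a1^2*a2*x1*y1^3*d1 + 48*a1^2*a2*x1^2*y1^2*l*d1 + 48*a1^2*a2*a3*x1*y1^2*d1 + 48*a1^2*a2*a3*x1^2*y1*l*d1 + 24*a1^2*a2*a3^2*x1*y1*d1 + 12*a1^2*a2*a3^2*x1^2*l*d1 + 4*a1^2*a2*a3^3*x1*d1 + (-32)*a1^3*x1*y1^3*l*d1 + (-72)*a1^3*x1^2*y1^2*l^2*d1 + (-16)*a1^3*x1^3*y1*l^3*d1 + 192*a1^3*x1^3*y1^2*d1 + 48*a1^3*x1^4*y1*l*d1 + (-48)*a1^3*a3*x1*y1^2*l*d1 + (-72)*a1^3*a3*x1^2*y1*l^2*d1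 + (-8)*a1^3*a3*x1^3*l^3*d1 + 192*a1^3*a3*x1^3*y1*d1 + 24*a1^3*a3*x1^4*l*d1 + (-24)*a1^3*a3^2*x1*y1*l*d1 + (-18)*a1^3*a3^2*x1^2*l^2*d1 + 48*a1^3*a3^2*x1^3*d1 + (-4)*a1^3*a3^3*x1*l*d1 + 24*a1^3*a2*x1^2*y1^2*d1 + 16*a1^3*a2*x1^3*y1*l*d1 + 24*a1^3*a2*a3*x1^2*y1*d1 + 8*a1^3*a2*a3*x1^3*l*d1 + 6*a1^3*a2*a3^2*x1^2*d1 + (-24)*a1^4*x1^2*y1^2*l*d1 + (-24)*a1^4*x1^3*y1*l^2*d1 + (-2)*a1^4*x1^4*l^3*d1 + 54*a1^4*x1^4*y1*d1 + 6*a1^4*x1^5*l*d1 + (-24)*a1^4*a3*x1^2*y1*l*d1 + (-12)*a1^4*a3*x1^3*l^2*d1 + 27*a1^4*a3*x1^4*d1 + (-6)*a1^4*a3^2*x1^2*l*d1 + 8*a1^4*a2*x1^3*y1*d1 + 2*a1^4*a2*x1^4*l*d1 + 4*a1^4*a2*a3*x1^3*d1 + (-8)*a1^5*x1^3*y1*l*d1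 + (-3)*a1^5*x1^4*l^2*d1 + 6*a1^5*x1^5*d1 + (-4)*a1^5*a3*x1^3*l*d1 + a1^5*a2*x1^4*d1 + (-1)*a1^6*x1^4*l*d1) * hl

section InvariantDifferential

open WeierstrassCurve WeierstrassCurve.Affine

variable {A : Type*} {F : Type*} [CommRing A] [Field F] [Algebra A F]
variable {V : WeierstrassCurve.Affine F} (D : Derivation A F F)

open Classical in
/-- The value of the invariant differential against the derivation `D` at an affine point. -/
noncomputable def ddfun (V : WeierstrassCurve.Affine F) (D : Derivation A F F) (x y : F) : F :=
  if y = V.negY x y then D y / (3 * x ^ 2 + 2 * V.a₂ * x + V.a₄ - V.a₁ * y)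
  else D x / (2 * y + V.a₁ * x + V.a₃)

/-- The value of the invariant differential against the derivation `D` at a point. -/
noncomputable def ddpt : V.Point → F
  | .zero => 0
  | @Point.some _ _ _ x y _ => ddfun V D x y

lemma ddpt_zero : ddpt D (0 : V.Point) = 0 := rfl

lemma ddpt_some {x y : F} (h : V.Nonsingular x y) : ddpt D (Point.some _ _ h) = ddfun V D x y := rfl

variable {D}

lemma ee_eq_zero_iff {x y : F} : y = V.negY x y ↔ 2 * y + V.a₁ * x + V.a₃ = 0 := by
  rw [negY]
  constructor <;> intro h <;> linear_combination h

lemma ff_ne_of_ee_eq {x y : F} (h : V.Nonsingular x y) (he : 2 * y + V.a₁ * x + V.a₃ = 0) :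
    3 * x ^ 2 + 2 * V.a₂ * x + V.a₄ - V.a₁ * y ≠ 0 := by
  rcases ((V.nonsingular_iff' x y).mp h).2 with hX | hY
  · exact fun h0 => hX (by linear_combination -h0)
  · exact absurd he hY

variable (ha₁ : D V.a₁ = 0) (ha₂ : D V.a₂ = 0) (ha₃ : D V.a₃ = 0) (ha₄ : D V.a₄ = 0)
  (ha₆ : D V.a₆ = 0)

include ha₁ ha₂ ha₃ ha₄ ha₆ in
lemma deriv_equation {x y : F} (h : V.Equation x y) :
    (2 * y + V.a₁ * x + V.a₃) * D y = (3 * x ^ 2 + 2 * V.a₂ * x + V.a₄ - V.a₁ * y) * D x := by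
  rw [equation_iff] at h
  have h' : y * y + V.a₁ * (x * y) + V.a₃ * y
      = x * (x * x) + V.a₂ * (x * x) + V.a₄ * x + V.a₆ := by linear_combination h
  have h0 := congrArg D h'
  simp only [map_add, Derivation.leibniz, smul_eq_mul, ha₁, ha₂, ha₃, ha₄, ha₆, mul_zero,
    zero_mul, add_zero, zero_add] at h0
  linear_combination h0

include ha₁ ha₂ ha₃ ha₄ ha₆ in
lemma ddpt_some_spec {x y : F} (h : V.Nonsingular x y) :
    D x = ddpt D (Point.some _ _ h) * (2 * y + V.a₁ * x + V.a₃) ∧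
    D y = ddpt D (Point.some _ _ h) * (3 * x ^ 2 + 2 * V.a₂ * x + V.a₄ - V.a₁ * y) := by
  have hder := deriv_equation ha₁ ha₂ ha₃ ha₄ ha₆ h.1
  rw [ddpt_some]
  by_cases hy : y = V.negY x y
  · have he := ee_eq_zero_iff.mp hy
    have hf := ff_ne_of_ee_eq h he
    have hx0 : D x = 0 := by
      have h1 : (3 * x ^ 2 + 2 * V.a₂ * x + V.a₄ - V.a₁ * y) * D x = 0 := by
        rw [← hder, he, zero_mul]
      exact (mul_eq_zero.mp h1).resolve_left hf
    rw [ddfun, if_pos hy]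
    exact ⟨by rw [he, mul_zero, hx0], (div_mul_cancel₀ _ hf).symm⟩
  · have he : 2 * y + V.a₁ * x + V.a₃ ≠ 0 := fun h0 => hy (ee_eq_zero_iff.mpr h0)
    rw [ddfun, if_neg hy]
    refine ⟨(div_mul_cancel₀ _ he).symm, ?_⟩
    rw [div_mul_eq_mul_div, eq_div_iff he]
    linear_combination hder

lemma ddpt_some_unique {x y : F} (h : V.Nonsingular x y) {d : F}
    (hx : D x = d * (2 * y + V.a₁ * x + V.a₃))
    (hy : D y = d * (3 * x ^ 2 + 2 * V.a₂ * x + V.a₄ - V.a₁ * y)) :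
    ddpt D (Point.some _ _ h) = d := by
  rw [ddpt_some]
  by_cases hyy : y = V.negY x y
  · have he := ee_eq_zero_iff.mp hyy
    have hf := ff_ne_of_ee_eq h he
    rw [ddfun, if_pos hyy, hy, mul_div_assoc, div_self hf, mul_one]
  · have he : 2 * y + V.a₁ * x + V.a₃ ≠ 0 := fun h0 => hyy (ee_eq_zero_iff.mpr h0)
    rw [ddfun, if_neg hyy, hx, mul_div_assoc, div_self he, mul_one]

end InvariantDifferential

section InvariantDifferentialAdd

open WeierstrassCurve WeierstrassCurve.Affine

variable {A : Type*} {F : Type*} [CommRing A] [Field F] [Algebra A F]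
variable {V : WeierstrassCurve.Affine F} {D : Derivation A F F} [DecidableEq F]

variable (ha₁ : D V.a₁ = 0) (ha₂ : D V.a₂ = 0) (ha₃ : D V.a₃ = 0) (ha₄ : D V.a₄ = 0)
  (ha₆ : D V.a₆ = 0)

include ha₁ ha₂ ha₃ ha₄ ha₆ in
lemma ddpt_add (P Q : V.Point) : ddpt D (P + Q) = ddpt D P + ddpt D Q := by
  rcases P with _ | @⟨x₁, y₁, h₁⟩
  · show ddpt D ((0 : V.Point) + Q) = ddpt D (0 : V.Point) + ddpt D Q
    rw [zero_add, ddpt_zero, zero_add]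
  rcases Q with _ | @⟨x₂, y₂, h₂⟩
  · show ddpt D (Point.some _ _ h₁ + (0 : V.Point)) = ddpt D (Point.some _ _ h₁) + ddpt D (0 : V.Point)
    rw [add_zero, ddpt_zero, add_zero]
  by_cases hx : x₁ = x₂
  · subst hx
    by_cases hy : y₁ = V.negY x₁ y₂
    · rw [Point.add_of_Y_eq rfl hy, ddpt_zero]
      obtain ⟨hx₂, hy₂⟩ := ddpt_some_spec ha₁ ha₂ ha₃ ha₄ ha₆ h₂
      simp only [negY] at hy
      have hDy₁ : D y₁ = -D y₂ - V.a₁ * D x₁ := by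
        have h0 := congrArg D hy
        simp only [map_sub, map_neg, Derivation.leibniz, smul_eq_mul, ha₁, ha₃, mul_zero,
          add_zero, sub_zero] at h0
        linear_combination h0
      have h1 : ddpt D (Point.some _ _ h₁) = -(ddpt D (Point.some _ _ h₂)) := by
        apply ddpt_some_unique
        · linear_combination hx₂ + 2 * ddpt D (Point.some _ _ h₂) * hy
        · linear_combination hDy₁ - hy₂ - V.a₁ * hx₂ - V.a₁ * ddpt D (Point.some _ _ h₂) * hy
      rw [h1, neg_add_cancel]
    · -- doubling case
      have hyy := Y_eq_of_Y_ne h₁.1 h₂.1 rfl hy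
      subst hyy
      rw [Point.add_of_Y_ne hy]
      have hy' : y₁ ≠ V.negY x₁ y₁ := hy
      have he : 2 * y₁ + V.a₁ * x₁ + V.a₃ ≠ 0 := fun h0 => hy' (ee_eq_zero_iff.mpr h0)
      obtain ⟨hDx₁, hDy₁⟩ := ddpt_some_spec ha₁ ha₂ ha₃ ha₄ ha₆ h₁
      have h21 : ddpt D (Point.some _ _ h₂) = ddpt D (Point.some _ _ h₁) := rfl
      rw [h21]
      set d₁ := ddpt D (Point.some _ _ h₁) with hd₁
      set l := V.slope x₁ x₁ y₁ y₁ with hls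
      have hl : l * (2 * y₁ + V.a₁ * x₁ + V.a₃)
          = 3 * x₁ ^ 2 + 2 * V.a₂ * x₁ + V.a₄ - V.a₁ * y₁ := by
        rw [hls, slope_of_Y_ne rfl hy']
        simp only [negY]
        rw [div_mul_eq_mul_div, div_eq_iff (fun h0 => he (by linear_combination h0))]
        ring
      have hl2 : l * (y₁ + y₁ + V.a₁ * x₁ + V.a₃)
          = x₁ * x₁ + x₁ * x₁ + x₁ * x₁ + (V.a₂ * x₁ + V.a₂ * x₁) + V.a₄ - V.a₁ * y₁ := by
        linear_combination hl
      have hDl : D l * (2 * y₁ + V.a₁ * x₁ + V.a₃)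
          = (6 * x₁ + 2 * V.a₂) * D x₁ - V.a₁ * D y₁ - l * (2 * D y₁ + V.a₁ * D x₁) := by
        have h0 := congrArg D hl2
        simp only [map_add, map_sub, Derivation.leibniz, smul_eq_mul, ha₁, ha₂, ha₃, ha₄,
          mul_zero, zero_mul, add_zero, zero_add] at h0
        linear_combination h0
      rw [hDx₁, hDy₁] at hDl
      set x₃ := V.addX x₁ x₁ l with hx3s
      set y₃ := V.addY x₁ x₁ y₁ l with hy3s
      have hx3 : x₃ = l ^ 2 + V.a₁ * l - V.a₂ - x₁ - x₁ := by
        rw [hx3s]; simp only [addX]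
      have hy3 : y₃ = -(l * (x₃ - x₁) + y₁) - V.a₁ * x₃ - V.a₃ := by
        rw [hy3s]; simp only [addY, negAddY, negY, ← hx3s]
      obtain ⟨c1, c2⟩ := certB V.a₁ V.a₂ V.a₃ V.a₄ V.a₆ x₁ y₁ l (D l) d₁ x₃ y₃ he
        ((V.equation_iff x₁ y₁).mp h₁.1) hl (by linear_combination hDl) hx3 hy3
      have hx3' : x₃ = l * l + V.a₁ * l - V.a₂ - x₁ - x₁ := by rw [hx3]; ring
      have hDx3 : D x₃ = (d₁ + d₁) * (2 * y₃ + V.a₁ * x₃ + V.a₃) := by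
        have h0 := congrArg D hx3'
        simp only [map_add, map_sub, Derivation.leibniz, smul_eq_mul, ha₁, ha₂, mul_zero,
          add_zero, zero_add] at h0
        rw [hDx₁] at h0
        linear_combination h0 + c1
      have hDy3 : D y₃ = (d₁ + d₁) * (3 * x₃ ^ 2 + 2 * V.a₂ * x₃ + V.a₄ - V.a₁ * y₃) := by
        have h0 := congrArg D hy3
        simp only [map_add, map_sub, map_neg, Derivation.leibniz, smul_eq_mul, ha₁, ha₃,
          mul_zero, add_zero, zero_add, sub_zero] at h0
        rw [hDx3, hDx₁, hDy₁] at h0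
        linear_combination h0 + c2
      exact ddpt_some_unique _ hDx3 hDy3
  · -- secant case
    rw [Point.add_of_X_ne hx]
    have hc : x₁ - x₂ ≠ 0 := sub_ne_zero.mpr hx
    obtain ⟨hDx₁, hDy₁⟩ := ddpt_some_spec ha₁ ha₂ ha₃ ha₄ ha₆ h₁
    obtain ⟨hDx₂, hDy₂⟩ := ddpt_some_spec ha₁ ha₂ ha₃ ha₄ ha₆ h₂
    set d₁ := ddpt D (Point.some _ _ h₁) with hd₁
    set d₂ := ddpt D (Point.some _ _ h₂) with hd₂
    set l := V.slope x₁ x₂ y₁ y₂ with hls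
    have hl : l * (x₁ - x₂) = y₁ - y₂ := by
      rw [hls, slope_of_X_ne hx, div_mul_cancel₀ _ hc]
    have hDl : D l * (x₁ - x₂) = (D y₁ - D y₂) - l * (D x₁ - D x₂) := by
      have h0 := congrArg D hl
      rw [Derivation.leibniz, smul_eq_mul, smul_eq_mul, map_sub, map_sub] at h0
      linear_combination h0
    rw [hDx₁, hDy₁, hDx₂, hDy₂] at hDl
    set x₃ := V.addX x₁ x₂ l with hx3s
    set y₃ := V.addY x₁ x₂ y₁ l with hy3s
    have hx3 : x₃ = l ^ 2 + V.a₁ * l - V.a₂ - x₁ - x₂ := by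
      rw [hx3s]; simp only [addX]
    have hy3 : y₃ = -(l * (x₃ - x₁) + y₁) - V.a₁ * x₃ - V.a₃ := by
      rw [hy3s]; simp only [addY, negAddY, negY, ← hx3s]
    obtain ⟨c1, c2⟩ := certA V.a₁ V.a₂ V.a₃ V.a₄ V.a₆ x₁ y₁ x₂ y₂ l (D l) d₁ d₂ x₃ y₃ hc
      ((V.equation_iff x₁ y₁).mp h₁.1) ((V.equation_iff x₂ y₂).mp h₂.1) hl
      (by linear_combination hDl) hx3 hy3
    have hx3' : x₃ = l * l + V.a₁ * l - V.a₂ - x₁ - x₂ := by rw [hx3]; ring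
    have hDx3 : D x₃ = (d₁ + d₂) * (2 * y₃ + V.a₁ * x₃ + V.a₃) := by
      have h0 := congrArg D hx3'
      simp only [map_add, map_sub, Derivation.leibniz, smul_eq_mul, ha₁, ha₂, mul_zero,
        add_zero, zero_add] at h0
      rw [hDx₁, hDx₂] at h0
      linear_combination h0 + c1
    have hDy3 : D y₃ = (d₁ + d₂) * (3 * x₃ ^ 2 + 2 * V.a₂ * x₃ + V.a₄ - V.a₁ * y₃) := by
      have h0 := congrArg D hy3
      simp only [map_add, map_sub, map_neg, Derivation.leibniz, smul_eq_mul, ha₁, ha₃,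
        mul_zero, add_zero, zero_add, sub_zero] at h0
      rw [hDx3, hDx₁, hDy₁] at h0
      linear_combination h0 + c2
    exact ddpt_some_unique _ hDx3 hDy3

include ha₁ ha₂ ha₃ ha₄ ha₆ in
lemma ddpt_coords_eq_zero {x y : F} (h : V.Nonsingular x y) {m : ℕ}
    (hm : m • (Point.some _ _ h : V.Point) = 0) (hm0 : (m : F) ≠ 0) : D x = 0 ∧ D y = 0 := by
  have h0 : (m : F) * ddpt D (Point.some _ _ h) = 0 := by
    have h1 : ddpt D (m • (Point.some _ _ h : V.Point)) = m • ddpt D (Point.some _ _ h) :=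
      map_nsmul (AddMonoidHom.mk' (ddpt D) (ddpt_add ha₁ ha₂ ha₃ ha₄ ha₆)) m (Point.some _ _ h)
    rw [hm, ddpt_zero] at h1
    rw [← nsmul_eq_mul]
    exact h1.symm
  have hdd0 : ddpt D (Point.some _ _ h) = 0 := by
    rcases mul_eq_zero.mp h0 with h2 | h2
    · exact absurd h2 hm0
    · exact h2
  obtain ⟨h1, h2⟩ := ddpt_some_spec ha₁ ha₂ ha₃ ha₄ ha₆ h
  rw [hdd0, zero_mul] at h1 h2
  exact ⟨h1, h2⟩

end InvariantDifferentialAdd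

section Descent

open WeierstrassCurve WeierstrassCurve.Affine

private lemma some_congr {R : Type*} [CommRing R] {W : WeierstrassCurve.Affine R}
    {x₁ y₁ x₂ y₂ : R} (hx : x₁ = x₂) (hy : y₁ = y₂) (h₁ : W.Nonsingular x₁ y₁)
    (h₂ : W.Nonsingular x₂ y₂) : Point.some _ _ h₁ = Point.some _ _ h₂ := by
  subst hx; subst hy; rfl

set_option maxHeartbeats 1000000 in
set_option synthInstance.maxHeartbeats 400000 in
open Classical in
/-- Let `K` be a field of characteristic `p` and `E` an elliptic curve over `K`. Every
torsion point of `E(Kp)` (where `Kp` is the perfect closure of `K`) whose order is coprime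
to `p` comes from `E(K)`; consequently the prime-to-`p` torsion of `E(Kp)` coincides with
the prime-to-`p` torsion of `E(K)`. -/
theorem prime_to_p_torsion_eq_of_perfectClosure
    (p : ℕ) [Fact p.Prime]
    (K : Type*) [Field K] [CharP K p]
    (E : WeierstrassCurve K) [E.IsElliptic]
    -- `Kp` is the perfect closure of `K`
    (Kp : Type*) [Field Kp] [Algebra K Kp] [ExpChar Kp p] [PerfectRing Kp p]
    [IsPRadical (algebraMap K Kp) p] :
    -- every torsion point of order coprime to `p` comes from `E(K)`
    (∀ P : (E⁄Kp).Point, IsOfFinAddOrder P → (addOrderOf P).Coprime p →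
      ∃ Q : (E⁄K).Point, Point.baseChange (W' := E) K Kp Q = P) ∧
    -- consequently, the prime-to-`p` torsion of `E(Kp)` coincides with that of `E(K)`
    {P : (E⁄Kp).Point | IsOfFinAddOrder P ∧ (addOrderOf P).Coprime p} =
      Point.baseChange (W' := E) K Kp '' {Q : (E⁄K).Point | IsOfFinAddOrder Q ∧ (addOrderOf Q).Coprime p} := by
  have hp : p.Prime := Fact.out
  haveI : ExpChar K p := ExpChar.prime hp
  haveI hPI : IsPurelyInseparable K Kp := (isPurelyInseparable_iff_pow_mem K p).mpr fun z => by
    obtain ⟨n, w, hw⟩ := IsPRadical.pow_mem (algebraMap K Kp) p z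
    exact ⟨n, w, hw⟩
  have main : ∀ P : (E⁄Kp).Point, (addOrderOf P).Coprime p →
      ∃ Q : (E⁄K).Point, Point.baseChange (W' := E) K Kp Q = P := by
    intro P hcop
    rcases P with _ | @⟨x, y, h⟩
    · exact ⟨0, rfl⟩
    set m := addOrderOf (Point.some _ _ h : (E⁄Kp).Point) with hmdef
    have hmP : m • (Point.some _ _ h : (E⁄Kp).Point) = 0 := addOrderOf_nsmul_eq_zero _
    set L := IntermediateField.adjoin K ({x, y} : Set Kp) with hLdef
    have hxmem : x ∈ L := IntermediateField.subset_adjoin K _ (Set.mem_insert x {y})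
    have hymem : y ∈ L := IntermediateField.subset_adjoin K _ (Set.mem_insert_of_mem x rfl)
    haveI : FiniteDimensional K L := IntermediateField.finiteDimensional_adjoin
      fun z _ => Algebra.IsIntegral.isIntegral z
    set x' : L := ⟨x, hxmem⟩ with hx'def
    set y' : L := ⟨y, hymem⟩ with hy'def
    have hL' : (E.baseChange L).toAffine.Nonsingular x' y' :=
      (baseChange_nonsingular (W := E.toAffine) (Algebra.ofId L Kp).injective x' y').mp h
    have hmap : Point.baseChange (W' := E) L Kp (Point.some _ _ hL') = Point.some _ _ h := by
      rw [Point.map_some]; rfl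
    have hmL : m • (Point.some _ _ hL' : (E⁄L).Point) = 0 := by
      apply Point.map_injective (f := Algebra.ofId L Kp)
      rw [map_nsmul, map_zero, hmap, hmP]
    haveI : CharP L p := charP_of_injective_algebraMap (algebraMap K L).injective p
    have hm0 : ((m : ℕ) : L) ≠ 0 := by
      rw [Ne, CharP.cast_eq_zero_iff L p]
      exact (Nat.Prime.coprime_iff_not_dvd hp).mp hcop.symm
    -- every `K`-derivation of `L` kills the coordinates of the point
    have hder : ∀ Dv : Derivation K L L, Dv x' = 0 ∧ Dv y' = 0 := by
      intro Dv
      exact ddpt_coords_eq_zero (V := (E.baseChange L).toAffine) (D := Dv)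
        (Dv.map_algebraMap E.a₁) (Dv.map_algebraMap E.a₂) (Dv.map_algebraMap E.a₃)
        (Dv.map_algebraMap E.a₄) (Dv.map_algebraMap E.a₆) hL' hmL hm0
    -- hence every `K`-derivation of `L` vanishes
    have hDzero : ∀ Dv : Derivation K L L, Dv = 0 := by
      have htop : Algebra.adjoin K ({x', y'} : Set L) = ⊤ := by
        have halg : ∀ z ∈ ({x, y} : Set Kp), IsAlgebraic K z :=
          fun z _ => (Algebra.IsIntegral.isIntegral (R := K) z).isAlgebraic
        apply Subalgebra.map_injective (f := L.val) L.val.injective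
        rw [AlgHom.map_adjoin, Algebra.map_top, IntermediateField.range_val]
        rw [show L.val '' ({x', y'} : Set L) = ({x, y} : Set Kp) by
          simp [Set.image_insert_eq, hx'def, hy'def]]
        exact (IntermediateField.adjoin_toSubalgebra_of_isAlgebraic halg).symm
      intro Dv
      ext z
      have hz : z ∈ Algebra.adjoin K ({x', y'} : Set L) := htop.symm ▸ Algebra.mem_top
      have h0 : Set.EqOn Dv (0 : Derivation K L L) ({x', y'} : Set L) := by
        rintro w (rfl | rfl)
        · simpa using (hder Dv).1
        · simpa using (hder Dv).2
      simpa using Derivation.eqOn_adjoin h0 hz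
    -- hence `L / K` is separable (working over `⊥` to stay in a single universe)
    haveI : Algebra.IsSeparable K ↥L := by
      have hDzero' : ∀ Dv : Derivation ↥(⊥ : IntermediateField K ↥L) ↥L ↥L, Dv = 0 := by
        intro Dv
        have h1 := hDzero (Dv.restrictScalars K)
        ext z
        simpa using DFunLike.congr_fun h1 z
      haveI : FiniteDimensional ↥(⊥ : IntermediateField K ↥L) ↥L :=
        FiniteDimensional.right K ↥(⊥ : IntermediateField K ↥L) ↥L
      haveI : Algebra.FormallyUnramified ↥(⊥ : IntermediateField K ↥L) ↥L := by
        constructor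
        refine subsingleton_of_forall_eq 0 fun ω => ?_
        rw [← Module.forall_dual_apply_eq_zero_iff ↥L]
        intro φ
        have hD0 := hDzero' (φ.compDer (KaehlerDifferential.D ↥(⊥ : IntermediateField K ↥L) ↥L))
        have hspan : Submodule.span ↥L
            (Set.range (KaehlerDifferential.D ↥(⊥ : IntermediateField K ↥L) ↥L))
            ≤ LinearMap.ker φ := by
          rw [Submodule.span_le]
          rintro _ ⟨z, rfl⟩
          simpa using DFunLike.congr_fun hD0 z
        have hmem : ω ∈ Submodule.span ↥L
            (Set.range (KaehlerDifferential.D ↥(⊥ : IntermediateField K ↥L) ↥L)) := by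
          rw [KaehlerDifferential.span_range_derivation]; trivial
        exact hspan hmem
      haveI : Algebra.IsSeparable ↥(⊥ : IntermediateField K ↥L) ↥L :=
        Algebra.FormallyUnramified.isSeparable ↥(⊥ : IntermediateField K ↥L) ↥L
      have he : RingHom.comp (algebraMap K ↥L)
          ↑(IntermediateField.botEquiv K ↥L).toRingEquiv
          = RingHom.comp ↑(RingEquiv.refl ↥L)
            (algebraMap ↥(⊥ : IntermediateField K ↥L) ↥L) := by
        ext z
        obtain ⟨w, hw⟩ := IntermediateField.mem_bot.mp z.2
        have hz : z = algebraMap K ↥(⊥ : IntermediateField K ↥L) w := by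
          apply Subtype.ext
          exact hw.symm
        rw [hz]
        simp [IntermediateField.botEquiv_def]
      exact Algebra.IsSeparable.of_equiv_equiv
        (IntermediateField.botEquiv K ↥L).toRingEquiv (RingEquiv.refl ↥L) he
    -- hence the coordinates are separable over `K`, so they lie in `K`
    have hsx : IsSeparable K x := by
      have h1 : IsSeparable K (algebraMap L Kp x') := by
        rw [IsSeparable, minpoly.algebraMap_eq (algebraMap L Kp).injective]
        exact Algebra.IsSeparable.isSeparable K x'
      exact h1
    have hsy : IsSeparable K y := by
      have h1 : IsSeparable K (algebraMap L Kp y') := by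
        rw [IsSeparable, minpoly.algebraMap_eq (algebraMap L Kp).injective]
        exact Algebra.IsSeparable.isSeparable K y'
      exact h1
    obtain ⟨x₀, hx₀⟩ := (isPurelyInseparable_iff.mp hPI x).2 hsx
    obtain ⟨y₀, hy₀⟩ := (isPurelyInseparable_iff.mp hPI y).2 hsy
    have hQ : (E.baseChange K).toAffine.Nonsingular x₀ y₀ := by
      apply (baseChange_nonsingular (W := E.toAffine) (Algebra.ofId K Kp).injective x₀ y₀).mp
      rw [show Algebra.ofId K Kp x₀ = x from hx₀, show Algebra.ofId K Kp y₀ = y from hy₀]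
      exact h
    refine ⟨Point.some _ _ hQ, ?_⟩
    rw [Point.map_some]
    exact some_congr hx₀ hy₀ _ h
  refine ⟨fun P _ hcop => main P hcop, ?_⟩
  ext P
  simp only [Set.mem_setOf_eq, Set.mem_image]
  constructor
  · rintro ⟨h1, h2⟩
    obtain ⟨Q, hQ⟩ := main P h2
    have horder : addOrderOf (Point.baseChange (W' := E) K Kp Q) = addOrderOf Q :=
      addOrderOf_injective (Point.baseChange (W' := E) K Kp) (Point.map_injective (W' := E) (Algebra.ofId K Kp)) Q
    rw [← hQ] at h1 h2
    refine ⟨Q, ⟨?_, ?_⟩, hQ⟩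
    · rw [← addOrderOf_pos_iff] at h1 ⊢
      rwa [horder] at h1
    · rwa [horder] at h2
  · rintro ⟨Q, ⟨h1, h2⟩, rfl⟩
    have horder : addOrderOf (Point.baseChange (W' := E) K Kp Q) = addOrderOf Q :=
      addOrderOf_injective (Point.baseChange (W' := E) K Kp) (Point.map_injective (W' := E) (Algebra.ofId K Kp)) Q
    constructor
    · rw [← addOrderOf_pos_iff] at h1 ⊢
      rwa [horder]
    · rwa [horder]

end Descent
end

section
/- Let p be a prime with p > 2, let K be a field extension of 𝔽_p(t) generated by a square root of t³ + t (i.e., K = 𝔽_p(t, (t³+t)^{1/2})), and let E be the elliptic curve over K defined by the Weierstrass equation y² = x³ + x. Then the group E(K^perf) of points of E with coordinates in the perfect closure of K is not finitely generated. In particular, the conclusion of the main theorem fails for isotrivial elliptic curves. -/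
open WeierstrassCurve WeierstrassCurve.Affine

set_option maxHeartbeats 1000000
set_option synthInstance.maxHeartbeats 400000

/-- `t = RatFunc.X` has no `p`-th root in `K = 𝔽_p(t)(√(t³+t))`. -/
theorem aux_no_p_root
    (p : ℕ) [Fact p.Prime] (hp : 2 < p)
    (K : Type*) [Field K] [Algebra (RatFunc (ZMod p)) K]
    (s : K) (hs : s ^ 2 = algebraMap (RatFunc (ZMod p)) K (RatFunc.X ^ 3 + RatFunc.X))
    (hgen : IntermediateField.adjoin (RatFunc (ZMod p)) {s} = ⊤)
    (c : K) : c ^ p ≠ algebraMap (RatFunc (ZMod p)) K RatFunc.X := by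
  intro hc
  let F := RatFunc (ZMod p)
  have hppr : p.Prime := Fact.out
  -- `X` is not a `p`-th power in `F`
  have hX : ∀ b : F, b ^ p ≠ RatFunc.X := by
    intro b hb
    have hb0 : b ≠ 0 := by
      rintro rfl
      rw [zero_pow hppr.ne_zero] at hb
      exact RatFunc.X_ne_zero hb.symm
    have hpow : ∀ n : ℕ, (b ^ n).intDegree = n * b.intDegree := by
      intro n
      induction n with
      | zero => simp [RatFunc.intDegree_one]
      | succ n ih =>
        rw [pow_succ, RatFunc.intDegree_mul (pow_ne_zero n hb0) hb0, ih]
        push_cast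
        ring
    have h1 : (p : ℤ) * b.intDegree = 1 := by
      rw [← hpow, hb, RatFunc.intDegree_X]
    have h2 : (p : ℤ) ∣ 1 := ⟨b.intDegree, h1.symm⟩
    have := Int.le_of_dvd one_pos h2
    have : p ≤ 1 := by exact_mod_cast this
    omega
  have hirr : Irreducible (Polynomial.X ^ p - Polynomial.C (RatFunc.X) : Polynomial F) :=
    X_pow_sub_C_irreducible_of_prime hppr hX
  -- `K` is finite dimensional of dimension at most `2` over `F`
  have hsaev : Polynomial.aeval s
      (Polynomial.X ^ 2 - Polynomial.C (RatFunc.X ^ 3 + RatFunc.X) : Polynomial F) = 0 := by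
    rw [map_sub, map_pow, Polynomial.aeval_X, Polynomial.aeval_C, hs, sub_self]
  have hsint : IsIntegral F s :=
    ⟨Polynomial.X ^ 2 - Polynomial.C (RatFunc.X ^ 3 + RatFunc.X),
      Polynomial.monic_X_pow_sub_C _ two_ne_zero, hsaev⟩
  haveI hfd : FiniteDimensional F K := by
    have h1 := IntermediateField.adjoin.finiteDimensional hsint
    rw [hgen] at h1
    exact (IntermediateField.topEquiv (F := F) (E := K)).toLinearEquiv.finiteDimensional
  have hrank2 : Module.finrank F K ≤ 2 := by
    have h2 : Module.finrank F ↥(IntermediateField.adjoin F {s}) = (minpoly F s).natDegree :=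
      IntermediateField.adjoin.finrank hsint
    have h3 : (minpoly F s).natDegree ≤ 2 := by
      have hne : (Polynomial.X ^ 2 - Polynomial.C (RatFunc.X ^ 3 + RatFunc.X) : Polynomial F) ≠ 0 :=
        Polynomial.X_pow_sub_C_ne_zero two_pos _
      have := Polynomial.natDegree_le_of_dvd (minpoly.dvd F s hsaev) hne
      rwa [Polynomial.natDegree_X_pow_sub_C] at this
    have h4 : Module.finrank F ↥(⊤ : IntermediateField F K) = Module.finrank F K :=
      (IntermediateField.topEquiv (F := F) (E := K)).toLinearEquiv.finrank_eq
    rw [hgen, h4] at h2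
    omega
  -- the minimal polynomial of `c` has degree `p`
  have hcaev : Polynomial.aeval c (Polynomial.X ^ p - Polynomial.C RatFunc.X : Polynomial F) = 0 := by
    rw [map_sub, map_pow, Polynomial.aeval_X, Polynomial.aeval_C, hc, sub_self]
  have hcint : IsIntegral F c :=
    ⟨Polynomial.X ^ p - Polynomial.C RatFunc.X, Polynomial.monic_X_pow_sub_C _ hppr.ne_zero, hcaev⟩
  have hmc : minpoly F c = Polynomial.X ^ p - Polynomial.C RatFunc.X :=
    (minpoly.eq_of_irreducible_of_monic hirr hcaev
      (Polynomial.monic_X_pow_sub_C _ hppr.ne_zero)).symm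
  have hdvd : p ∣ Module.finrank F K := by
    have := minpoly.degree_dvd hcint
    rwa [hmc, Polynomial.natDegree_X_pow_sub_C] at this
  have hpos : 0 < Module.finrank F K := Module.finrank_pos
  have := Nat.le_of_dvd hpos hdvd
  omega


open Classical in
/-- **Remark (isotrivial counterexample).** Let `p > 2` be a prime, let
`K = 𝔽_p(t, (t³+t)^{1/2})` be the quadratic extension of the rational function field
`𝔽_p(t)` generated by a square root `s` of `t³ + t`, and let `E` be the (isotrivial)
elliptic curve `y² = x³ + x` over `K`. Then the group of points of `E` over the perfect
closure `Kp` of `K` is not finitely generated. -/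
theorem isotrivial_points_perfectClosure_not_fg
    (p : ℕ) [Fact p.Prime] (hp : 2 < p)
    (K : Type*) [Field K] [Algebra (RatFunc (ZMod p)) K]
    -- `s` is a square root of `t³ + t` in `K`
    (s : K) (hs : s ^ 2 = algebraMap (RatFunc (ZMod p)) K (RatFunc.X ^ 3 + RatFunc.X))
    -- `K` is generated over `𝔽_p(t)` by `s`
    (hgen : IntermediateField.adjoin (RatFunc (ZMod p)) {s} = ⊤)
    -- `E` is the elliptic curve `y² = x³ + x` over `K`
    (E : WeierstrassCurve K) [E.IsElliptic]
    (hE : E = { a₁ := 0, a₂ := 0, a₃ := 0, a₄ := 1, a₆ := 0 })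
    -- `Kp` is the perfect closure of `K`
    (Kp : Type*) [Field Kp] [Algebra K Kp] [ExpChar Kp p] [PerfectRing Kp p]
    [IsPRadical (algebraMap K Kp) p] :
    ¬ AddGroup.FG (WeierstrassCurve.Affine.Point (WeierstrassCurve.Affine.baseChange E Kp)) := by
  intro hfg
  classical
  have hppr : p.Prime := Fact.out
  set ι : K →+* Kp := algebraMap K Kp with hι
  set tK : K := algebraMap (RatFunc (ZMod p)) K RatFunc.X with htK
  -- monotonicity of the levels
  have hmono : ∀ {a : Kp} {n m : ℕ}, n ≤ m → (∃ c : K, ι c = a ^ p ^ n) →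
      ∃ c : K, ι c = a ^ p ^ m := by
    rintro a n m hnm ⟨c, hc⟩
    exact ⟨c ^ p ^ (m - n), by
      rw [map_pow, hc, ← pow_mul, ← pow_add, Nat.add_sub_cancel' hnm]⟩
  -- a finite generating set
  obtain ⟨Sset, hSgen, hSfin⟩ := AddGroup.fg_iff.mp hfg
  -- levels of the generators
  have hex : ∀ Q : WeierstrassCurve.Affine.Point (WeierstrassCurve.Affine.baseChange E Kp), ∃ n : ℕ, Q = 0 ∨ ∃ (x y : Kp)
      (h : (E.baseChange Kp).toAffine.Nonsingular x y), Q = Point.some _ _ h ∧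
        (∃ c : K, ι c = x ^ p ^ n) ∧ (∃ c : K, ι c = y ^ p ^ n) := by
    rintro (_ | @⟨x, y, h⟩)
    · exact ⟨0, Or.inl rfl⟩
    · obtain ⟨n₁, c₁, hc₁⟩ := IsPRadical.pow_mem (algebraMap K Kp) p x
      obtain ⟨n₂, c₂, hc₂⟩ := IsPRadical.pow_mem (algebraMap K Kp) p y
      exact ⟨max n₁ n₂, Or.inr ⟨x, y, h, rfl,
        hmono (le_max_left n₁ n₂) ⟨c₁, hc₁⟩, hmono (le_max_right n₁ n₂) ⟨c₂, hc₂⟩⟩⟩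
  choose nfun hnfun using hex
  set m : ℕ := hSfin.toFinset.sup nfun with hm
  have hodd : Odd (p ^ m) := (hppr.odd_of_ne_two (by omega)).pow
  -- the subfield of elements of level `m`
  set L : Subfield Kp :=
    { carrier := {a | ∃ c : K, ι c = a ^ p ^ m}
      zero_mem' := ⟨0, by rw [map_zero, zero_pow (pow_ne_zero m hppr.ne_zero)]⟩
      one_mem' := ⟨1, by rw [map_one, one_pow]⟩
      add_mem' := by
        rintro a b ⟨c, hc⟩ ⟨d, hd⟩
        exact ⟨c + d, by rw [map_add, hc, hd, add_pow_expChar_pow]⟩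
      mul_mem' := by
        rintro a b ⟨c, hc⟩ ⟨d, hd⟩
        exact ⟨c * d, by rw [map_mul, hc, hd, mul_pow]⟩
      neg_mem' := by
        rintro a ⟨c, hc⟩
        exact ⟨-c, by rw [map_neg, hc, hodd.neg_pow]⟩
      inv_mem' := by
        rintro a ⟨c, hc⟩
        exact ⟨c⁻¹, by rw [map_inv₀, hc, inv_pow]⟩ } with hL
  have hKmem : ∀ c : K, ι c ∈ L := fun c => ⟨c ^ p ^ m, by rw [map_pow]⟩
  letI : Algebra K ↥L :=
    RingHom.toAlgebra
      { toFun := fun c => (⟨ι c, hKmem c⟩ : ↥L)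
        map_one' := by ext; exact map_one ι
        map_mul' := fun a b => by ext; exact map_mul ι a b
        map_zero' := by ext; exact map_zero ι
        map_add' := fun a b => by ext; exact map_add ι a b }
  haveI : IsScalarTower K ↥L Kp := IsScalarTower.of_algebraMap_eq fun c => rfl
  let f : ↥L →ₐ[K] Kp := { toRingHom := L.subtype, commutes' := fun c => rfl }
  let Φ : WeierstrassCurve.Affine.Point (WeierstrassCurve.Affine.baseChange E ↥L) →+ WeierstrassCurve.Affine.Point (WeierstrassCurve.Affine.baseChange E Kp) := Point.map (W' := E) f
  -- all generators lie in the range of `Φ`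
  have hle : AddSubgroup.closure Sset ≤ Φ.range := by
    rw [AddSubgroup.closure_le]
    intro Q hQ
    rcases hnfun Q with hQ0 | ⟨x, y, h, rfl, hx, hy⟩
    · exact hQ0 ▸ ⟨0, map_zero Φ⟩
    · have hnm : nfun (Point.some _ _ h) ≤ m := Finset.le_sup (hSfin.mem_toFinset.mpr hQ)
      have hx' : x ∈ L := hmono hnm hx
      have hy' : y ∈ L := hmono hnm hy
      have h' : (E.baseChange ↥L).toAffine.Nonsingular ⟨x, hx'⟩ ⟨y, hy'⟩ :=
        (WeierstrassCurve.Affine.baseChange_nonsingular (W := E) (f := f) f.injective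
          ⟨x, hx'⟩ ⟨y, hy'⟩).mp h
      exact ⟨Point.some _ _ h', rfl⟩
  -- the point at level `m + 1`
  set φn := iterateFrobeniusEquiv Kp p (m + 1) with hφn
  set u : Kp := φn.symm (ι tK) with hu
  set v : Kp := φn.symm (ι s) with hv
  have hup : u ^ p ^ (m + 1) = ι tK := by
    rw [hu, ← iterateFrobeniusEquiv_def Kp p, hφn, RingEquiv.apply_symm_apply]
  have hvp : v ^ p ^ (m + 1) = ι s := by
    rw [hv, ← iterateFrobeniusEquiv_def Kp p, hφn, RingEquiv.apply_symm_apply]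
  have hs' : s ^ 2 = tK ^ 3 + tK := by
    rw [hs, map_add, map_pow, htK]
  have hveq : v ^ 2 = u ^ 3 + u := by
    apply φn.injective
    simp only [map_add, map_pow, hφn, iterateFrobeniusEquiv_def, hup, hvp]
    rw [← map_pow ι, ← map_pow ι, ← map_add ι, hs']
  have hequ : (E.baseChange Kp).toAffine.Equation u v := by
    rw [equation_iff]
    subst hE
    simp only [WeierstrassCurve.baseChange, map_a₁, map_a₂, map_a₃, map_a₄, map_a₆]
    simp only [map_zero, map_one]
    linear_combination hveq
  haveI : (E.baseChange Kp).IsElliptic := inferInstanceAs (E.map (algebraMap K Kp)).IsElliptic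
  have hns : (E.baseChange Kp).toAffine.Nonsingular u v :=
    (WeierstrassCurve.Affine.equation_iff_nonsingular (W := E.baseChange Kp)).mp hequ
  have hP : Point.some _ _ hns ∈ Φ.range := by
    apply hle
    rw [hSgen]
    trivial
  obtain ⟨Q, hQ⟩ := hP
  -- hence `u` has level `m`, contradiction
  have humem : u ∈ L := by
    rcases Q with _ | @⟨x', y', h'⟩
    · exact absurd (map_zero Φ ▸ hQ) (by simp [Point.zero_def])
    · have := (Point.some.inj hQ).left
      rw [← this]
      exact x'.2
  obtain ⟨c, hc⟩ := humem
  have hfinal : c ^ p = tK := by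
    apply (algebraMap K Kp).injective
    rw [map_pow, hc, ← pow_mul, ← pow_succ, hup]
  exact aux_no_p_root p hp K s hs hgen c hfinal
end
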